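/- For every classifier f and radius r, the astuteness of f at radius r is at most the supremum of Σ_j ∫_{S_j} p(y=j|x) dμ(x) over all tuples of pairwise 2r-separated measurable sets S_1, ..., S_C. -/

import Mathlib

open MeasureTheory Set
open scoped ENNReal

/-- The robustness radius of a classifier `f` at a point `x`. -/
noncomputable def robustnessRadius {E : Type*} [NormedAddCommGroup E] {C : ℕ}
    (f : E → Fin C) (x : E) : ℝ :=
  sInf {d : ℝ | ∃ x', f x' ≠ f x ∧ d = dist x x'}

/-- The robust region `S_j(f, r)` of label `j`. -/
def robustRegion {E : Type*} [NormedAddCommGroup E] {C : ℕ}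
    (f : E → Fin C) (r : ℝ) (j : Fin C) : Set E :=
  {x | f x = j ∧ r ≤ robustnessRadius f x}

/-- A tuple of measurable sets that is pairwise `2r`-separated. -/
def SepFeasible {E : Type*} [NormedAddCommGroup E] [MeasurableSpace E] {C : ℕ}
    (r : ℝ) (S : Fin C → Set E) : Prop :=
  (∀ j, MeasurableSet (S j)) ∧
    ∀ j j', j ≠ j' → ∀ u ∈ S j, ∀ v ∈ S j', 2 * r ≤ dist u v

/-!
The robust regions `S_j(f, r)` are themselves a feasible tuple. For `u ∈ S_j`, `v ∈ S_{j'}` with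
`j ≠ j'`, the midpoint `m` of `u` and `v` carries a label different from that of `u` or from
that of `v`, so `r ≤ dist u m = dist u v / 2` or `r ≤ dist v m = dist u v / 2`. The astute set
is the union of the sets `S_j × {j}`, whose masses are `∫_{S_j} p(j ∣ x) dμ_X`, so the
astuteness is bounded by the sum attached to this feasible tuple.
-/

section Robustness

variable {E : Type*} [NormedAddCommGroup E] {C : ℕ} (f : E → Fin C)

lemma robustnessRadius_le_dist {x x' : E} (h : f x' ≠ f x) :
    robustnessRadius f x ≤ dist x x' :=
  csInf_le ⟨0, by rintro d ⟨y, -, rfl⟩; exact dist_nonneg⟩ ⟨x', h, rfl⟩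

lemma two_mul_le_dist_of_mem_robustRegion [NormedSpace ℝ E] {r : ℝ} {j j' : Fin C}
    (hjj' : j ≠ j') {u v : E} (hu : u ∈ robustRegion f r j) (hv : v ∈ robustRegion f r j') :
    2 * r ≤ dist u v := by
  obtain ⟨rfl, hru⟩ := hu
  obtain ⟨rfl, hrv⟩ := hv
  set m := midpoint ℝ u v
  have hum : dist u m = dist u v / 2 := by
    rw [dist_comm, dist_midpoint_left, Real.norm_two]; ring
  have hvm : dist v m = dist u v / 2 := by
    rw [dist_comm, dist_midpoint_right, Real.norm_two]; ring
  by_cases hm : f m = f u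
  · have : r ≤ dist v m := hrv.trans (robustnessRadius_le_dist f (hm ▸ hjj'))
    linarith
  · have : r ≤ dist u m := hru.trans (robustnessRadius_le_dist f hm)
    linarith

lemma sepFeasible_robustRegion [NormedSpace ℝ E] [MeasurableSpace E] {r : ℝ}
    (hS : ∀ j, MeasurableSet (robustRegion f r j)) :
    SepFeasible r (robustRegion f r) :=
  ⟨hS, fun _ _ hjj' _ hu _ hv => two_mul_le_dist_of_mem_robustRegion f hjj' hu hv⟩

lemma setOf_astute_eq_iUnion_robustRegion (r : ℝ) :
    {q : E × Fin C | r ≤ robustnessRadius f q.1 ∧ f q.1 = q.2} =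
      ⋃ j, robustRegion f r j ×ˢ ({j} : Set (Fin C)) := by
  ext ⟨x, y⟩
  simp [robustRegion, and_comm]

end Robustness

theorem stmt3_general {E : Type*} [NormedAddCommGroup E] [NormedSpace ℝ E] [MeasurableSpace E]
    {C : ℕ} (μ : Measure (E × Fin C))
    (f : E → Fin C) (r : ℝ) (p : Fin C → E → ℝ≥0∞)
    (hp : ∀ (j : Fin C) (A : Set E), MeasurableSet A →
      μ (A ×ˢ ({j} : Set (Fin C))) = ∫⁻ x in A, p j x ∂(μ.map Prod.fst))
    (hS : ∀ j, MeasurableSet (robustRegion f r j)) :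
    μ {q : E × Fin C | r ≤ robustnessRadius f q.1 ∧ f q.1 = q.2} ≤
      ⨆ (S : Fin C → Set E) (_ : SepFeasible r S),
        ∑ j : Fin C, ∫⁻ x in S j, p j x ∂(μ.map Prod.fst) := by
  calc μ {q : E × Fin C | r ≤ robustnessRadius f q.1 ∧ f q.1 = q.2}
      ≤ ∑ j, μ (robustRegion f r j ×ˢ ({j} : Set (Fin C))) := by
        rw [setOf_astute_eq_iUnion_robustRegion]
        exact measure_iUnion_fintype_le μ _
    _ = ∑ j, ∫⁻ x in robustRegion f r j, p j x ∂(μ.map Prod.fst) :=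
        Finset.sum_congr rfl fun j _ => hp j _ (hS j)
    _ ≤ _ := le_iSup₂_of_le (robustRegion f r) (sepFeasible_robustRegion f hS) le_rfl

/-- The astuteness of any classifier `f` at radius `r` is at most the supremum of
`Σ_j ∫_{S_j} p(y = j ∣ x) dμ_X(x)` over all pairwise `2r`-separated tuples of measurable
sets `S_1, …, S_C`. -/
theorem stmt3 {E : Type*} [NormedAddCommGroup E] [NormedSpace ℝ E] [MeasurableSpace E]
    {C : ℕ} (μ : Measure (E × Fin C)) [IsProbabilityMeasure μ]
    (f : E → Fin C) (r : ℝ) (hr : 0 < r) (p : Fin C → E → ℝ≥0∞)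
    (hp : ∀ (j : Fin C) (A : Set E), MeasurableSet A →
      μ (A ×ˢ ({j} : Set (Fin C))) = ∫⁻ x in A, p j x ∂(μ.map Prod.fst))
    (hS : ∀ j, MeasurableSet (robustRegion f r j)) :
    μ {q : E × Fin C | r ≤ robustnessRadius f q.1 ∧ f q.1 = q.2} ≤
      ⨆ (S : Fin C → Set E) (_ : SepFeasible r S),
        ∑ j : Fin C, ∫⁻ x in S j, p j x ∂(μ.map Prod.fst) :=
  stmt3_general μ f r p hp hS
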